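/- arXiv:2001.08899 — 3 statements merged into one kernel-verified Lean document; each statement's English description precedes it below -/
import Mathlib

section
/- Let P be a finite set of points in the plane in general position and let C be a crossing-free, cycle-free set of segments with endpoints in P. Order the points of G := pts(C) \ low(C) from left to right as p'_1, ..., p'_{|G|}, and let Π be the partition of G induced by connectivity in C (two points of G are in the same block iff they are joined by a path of segments of C). Then Π is a non-crossing partition of the linearly ordered set (p'_1, ..., p'_{|G|}). -/
open Finset

/-- A segment is a pair of points in the plane (left endpoint, right endpoint). -/
abbrev Seg := (ℝ × ℝ) × (ℝ × ℝ)

/-- The lower shadow of a segment `s`: points whose upward vertical ray meets the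
relative interior of `s`. -/
def lowShadow (s : Seg) : Set (ℝ × ℝ) :=
  {p | ∃ y : ℝ, p.2 < y ∧ (p.1, y) ∈ openSegment ℝ s.1 s.2}

/-- The upper shadow of a segment `s`: points whose downward vertical ray meets the
relative interior of `s`. -/
def uppShadow (s : Seg) : Set (ℝ × ℝ) :=
  {p | ∃ y : ℝ, y < p.2 ∧ (p.1, y) ∈ openSegment ℝ s.1 s.2}

/-- The endpoints of a segment. -/
def segPts (s : Seg) : Set (ℝ × ℝ) := {s.1, s.2}

/-- The dependency relation: `s₂` depends on `s₁` (written `s₁ ⊑ s₂`) whenever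
`pts(s₁) ∩ low(s₂) ≠ ∅` or `upp(s₁) ∩ pts(s₂) ≠ ∅`. -/
def SegDep (s₁ s₂ : Seg) : Prop :=
  (∃ p ∈ segPts s₁, p ∈ lowShadow s₂) ∨ (∃ p ∈ uppShadow s₁, p ∈ segPts s₂)

/-- A segment `s` is extreme in `C` if no other segment of `C` depends on it. -/
def SegExtreme (C : Finset Seg) (s : Seg) : Prop :=
  s ∈ C ∧ ∀ s' ∈ C, s' ≠ s → ¬ SegDep s s'

/-- `s` is the right-most extreme element of `C`. -/
def IsRex (C : Finset Seg) (s : Seg) : Prop :=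
  SegExtreme C s ∧ ∀ s', SegExtreme C s' → s' ≠ s → s'.2.1 ≤ s.1.1

/-- One extension step `C →ₛ C'`: `C = C' \ {s}` and `s = rex(C')`. -/
def StepRel (C : Finset Seg) (s : Seg) (C' : Finset Seg) : Prop :=
  C = C'.erase s ∧ s ∈ C' ∧ IsRex C' s

/-- `C` is a prefix of `C*`: `C*` is obtained from `C` by repeatedly adding a segment
that is the right-most extreme element of the extended set. -/
def IsSegPrefix (C C' : Finset Seg) : Prop :=
  Relation.ReflTransGen (fun A B => ∃ s, StepRel A s B) C C'

/-- `C` is crossing-free: no two distinct segments share an interior point. -/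
def CrossingFree (C : Finset Seg) : Prop :=
  ∀ s ∈ C, ∀ t ∈ C, s ≠ t →
    Disjoint (openSegment ℝ s.1 s.2) (openSegment ℝ t.1 t.2)

/-- Segments of `C` have endpoints in `P`, listed from left to right. -/
def SegsOn (P : Finset (ℝ × ℝ)) (C : Finset Seg) : Prop :=
  ∀ s ∈ C, s.1 ∈ P ∧ s.2 ∈ P ∧ s.1.1 < s.2.1

/-- The graph on the plane induced by the segment set `C`. -/
def segGraph (C : Finset Seg) : SimpleGraph (ℝ × ℝ) where
  Adj a b := a ≠ b ∧ ((a, b) ∈ C ∨ (b, a) ∈ C)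
  symm := ⟨fun a b h => ⟨h.1.symm, h.2.symm⟩⟩
  loopless := ⟨fun a h => h.1 rfl⟩

/-- `P` is in general position: no three distinct points are collinear. -/
def GenPos (P : Finset (ℝ × ℝ)) : Prop :=
  ∀ p ∈ P, ∀ q ∈ P, ∀ r ∈ P, p ≠ q → q ≠ r → p ≠ r →
    ¬ Collinear ℝ ({p, q, r} : Set (ℝ × ℝ))

/-- No two points of `P` share an `x`-coordinate. -/
def DistinctX (P : Finset (ℝ × ℝ)) : Prop :=
  ∀ p ∈ P, ∀ q ∈ P, p ≠ q → p.1 ≠ q.1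

/-- `C` has a hidden component: some connected component of `C` lies entirely below
segments of `C`. -/
def HasHiddenComponent (P : Finset (ℝ × ℝ)) (C : Finset Seg) : Prop :=
  ∃ p ∈ P, ∀ q, (segGraph C).Reachable p q → ∃ s ∈ C, q ∈ lowShadow s

/-- The degree of a point `p` in the segment set `C`. -/
noncomputable def segDeg (C : Finset Seg) (p : ℝ × ℝ) : ℕ :=
  (C.filter (fun s => s.1 = p ∨ s.2 = p)).card

/-- `C` is a crossing-free spanning tree on `P`. -/
def IsCFSpanningTree (P : Finset (ℝ × ℝ)) (C : Finset Seg) : Prop :=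
  SegsOn P C ∧ CrossingFree C ∧ (segGraph C).IsAcyclic ∧
  ∀ p ∈ P, ∀ q ∈ P, (segGraph C).Reachable p q

/-- `C` is a crossing-free spanning cycle on `P`. -/
def IsCFSpanningCycle (P : Finset (ℝ × ℝ)) (C : Finset Seg) : Prop :=
  SegsOn P C ∧ CrossingFree C ∧ (∀ p ∈ P, segDeg C p = 2) ∧
  ∀ p ∈ P, ∀ q ∈ P, (segGraph C).Reachable p q

/-- The gray points `pts(C) \ low(C)`. -/
def grayPts (C : Finset Seg) : Set (ℝ × ℝ) :=
  {p | (∃ s ∈ C, p ∈ segPts s) ∧ ∀ s ∈ C, p ∉ lowShadow s}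

section Aux


open SimpleGraph

/-- Height of the line through `u`, `v` at abscissa `x`. -/
noncomputable def htF (u v : ℝ × ℝ) (x : ℝ) : ℝ :=
  (u.2 * (v.1 - x) + v.2 * (x - u.1)) / (v.1 - u.1)

lemma htF_left {u v : ℝ × ℝ} (h : u.1 < v.1) : htF u v u.1 = u.2 := by
  unfold htF; rw [div_eq_iff (by linarith : v.1 - u.1 ≠ 0)]; ring

lemma htF_right {u v : ℝ × ℝ} (h : u.1 < v.1) : htF u v v.1 = v.2 := by
  unfold htF; rw [div_eq_iff (by linarith : v.1 - u.1 ≠ 0)]; ring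

lemma htF_continuous (u v : ℝ × ℝ) : Continuous (htF u v) := by
  unfold htF; fun_prop

lemma mem_openSegment_iff' {u v : ℝ × ℝ} (h : u.1 < v.1) {x y : ℝ} :
    (x, y) ∈ openSegment ℝ u v ↔ u.1 < x ∧ x < v.1 ∧ y = htF u v x := by
  have hw : v.1 - u.1 ≠ 0 := by linarith
  rw [openSegment_eq_image]
  constructor
  · rintro ⟨θ, ⟨h0, h1⟩, hz⟩
    have hx : (1 - θ) * u.1 + θ * v.1 = x := by
      simpa [Prod.fst_add, Prod.smul_fst, smul_eq_mul] using congrArg Prod.fst hz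
    have hy : (1 - θ) * u.2 + θ * v.2 = y := by
      simpa [Prod.snd_add, Prod.smul_snd, smul_eq_mul] using congrArg Prod.snd hz
    have hxu : x - u.1 = θ * (v.1 - u.1) := by linear_combination -hx
    have hxv : v.1 - x = (1 - θ) * (v.1 - u.1) := by linear_combination hx
    refine ⟨by nlinarith [mul_pos h0 (by linarith : (0:ℝ) < v.1 - u.1)],
            by nlinarith [mul_pos (by linarith : (0:ℝ) < 1 - θ) (by linarith : (0:ℝ) < v.1 - u.1)], ?_⟩
    unfold htF
    rw [eq_div_iff hw]
    linear_combination (v.2 - u.2) * hx + (u.1 - v.1) * hy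
  · rintro ⟨h1, h2, h3⟩
    refine ⟨(x - u.1) / (v.1 - u.1), ⟨div_pos (by linarith) (by linarith), ?_⟩, ?_⟩
    · rw [div_lt_one (by linarith)]; linarith
    · show (1 - (x - u.1) / (v.1 - u.1)) • u + ((x - u.1) / (v.1 - u.1)) • v = (x, y)
      refine Prod.ext ?_ ?_
      · show (1 - (x - u.1) / (v.1 - u.1)) * u.1 + (x - u.1) / (v.1 - u.1) * v.1 = x
        field_simp
        ring
      · show (1 - (x - u.1) / (v.1 - u.1)) * u.2 + (x - u.1) / (v.1 - u.1) * v.2 = y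
        rw [h3]; unfold htF; field_simp; ring

lemma collinear_of_mem_openSegment {z u v : ℝ × ℝ} (h : z ∈ openSegment ℝ u v) :
    Collinear ℝ ({z, u, v} : Set (ℝ × ℝ)) := by
  rw [openSegment_eq_image] at h
  obtain ⟨θ, _, hz⟩ := h
  rw [collinear_iff_of_mem (Set.mem_insert_of_mem _ (Set.mem_insert _ _))]
  refine ⟨v - u, ?_⟩
  intro p hp
  simp only [Set.mem_insert_iff, Set.mem_singleton_iff] at hp
  rcases hp with rfl | rfl | rfl
  · exact ⟨θ, by rw [← hz]; simp [smul_sub, sub_smul]; abel⟩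
  · exact ⟨0, by simp⟩
  · exact ⟨1, by simp⟩

lemma sign_const' {δ : ℝ → ℝ} (hc : Continuous δ) {α β : ℝ} (hle : α ≤ β)
    (hnz : ∀ x, α ≤ x → x ≤ β → δ x ≠ 0) : (0 < δ α ↔ 0 < δ β) := by
  constructor
  · intro hα
    by_contra hβ
    have hβ' : δ β < 0 := lt_of_le_of_ne (not_lt.1 hβ) (hnz β hle le_rfl)
    obtain ⟨x, hx, hx0⟩ := intermediate_value_Icc' hle hc.continuousOn
      (Set.mem_Icc.2 ⟨le_of_lt hβ', le_of_lt hα⟩)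
    exact hnz x hx.1 hx.2 hx0
  · intro hβ
    by_contra hα
    have hα' : δ α < 0 := lt_of_le_of_ne (not_lt.1 hα) (hnz α le_rfl hle)
    obtain ⟨x, hx, hx0⟩ := intermediate_value_Icc hle hc.continuousOn
      (Set.mem_Icc.2 ⟨le_of_lt hα', le_of_lt hβ⟩)
    exact hnz x hx.1 hx.2 hx0

open Classical in
/-- Classical indicator with values in `ZMod 2`. -/
noncomputable def ind (p : Prop) : ZMod 2 := if p then 1 else 0

lemma ind_pos {p : Prop} (h : p) : ind p = 1 := by unfold ind; exact if_pos h

lemma ind_neg {p : Prop} (h : ¬p) : ind p = 0 := by unfold ind; exact if_neg h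

lemma ind_congr {p q : Prop} (h : p ↔ q) : ind p = ind q := by
  by_cases hp : p
  · rw [ind_pos hp, ind_pos (h.1 hp)]
  · rw [ind_neg hp, ind_neg (fun hq => hp (h.2 hq))]

lemma parity_abstract {δ : ℝ → ℝ} (hc : Continuous δ)
    {p1 q1 l1 r1 : ℝ} (hpq : p1 < q1) (hlr : l1 < r1)
    (hpl : p1 ≠ l1) (hpr : p1 ≠ r1) (hql : q1 ≠ l1) (hqr : q1 ≠ r1)
    (hnz : ∀ x, p1 ≤ x → x ≤ q1 → l1 ≤ x → x ≤ r1 → δ x ≠ 0) :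
    ind (l1 < q1 ∧ q1 ≤ r1 ∧ 0 < δ q1) + ind (l1 < p1 ∧ p1 ≤ r1 ∧ 0 < δ p1) =
    ind (p1 < l1 ∧ l1 ≤ q1 ∧ 0 < δ l1) + ind (p1 < r1 ∧ r1 ≤ q1 ∧ 0 < δ r1) := by
  rcases hql.lt_or_gt with hq | hq
  · have e1 : ¬(l1 < q1 ∧ q1 ≤ r1 ∧ 0 < δ q1) := by rintro ⟨h1, _, _⟩; linarith
    have e2 : ¬(l1 < p1 ∧ p1 ≤ r1 ∧ 0 < δ p1) := by rintro ⟨h1, _, _⟩; linarith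
    have e3 : ¬(p1 < l1 ∧ l1 ≤ q1 ∧ 0 < δ l1) := by rintro ⟨_, h2, _⟩; linarith
    have e4 : ¬(p1 < r1 ∧ r1 ≤ q1 ∧ 0 < δ r1) := by rintro ⟨_, h2, _⟩; linarith
    rw [ind_neg e1, ind_neg e2, ind_neg e3, ind_neg e4]
  rcases hpr.lt_or_gt with hp | hp
  swap
  · have e1 : ¬(l1 < q1 ∧ q1 ≤ r1 ∧ 0 < δ q1) := by rintro ⟨_, h2, _⟩; linarith
    have e2 : ¬(l1 < p1 ∧ p1 ≤ r1 ∧ 0 < δ p1) := by rintro ⟨_, h2, _⟩; linarith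
    have e3 : ¬(p1 < l1 ∧ l1 ≤ q1 ∧ 0 < δ l1) := by rintro ⟨h1, _, _⟩; linarith
    have e4 : ¬(p1 < r1 ∧ r1 ≤ q1 ∧ 0 < δ r1) := by rintro ⟨h1, _, _⟩; linarith
    rw [ind_neg e1, ind_neg e2, ind_neg e3, ind_neg e4]
  rcases hpl.lt_or_gt with hl | hl <;> rcases hqr.lt_or_gt with hr | hr
  · have e2 : ¬(l1 < p1 ∧ p1 ≤ r1 ∧ 0 < δ p1) := by rintro ⟨h1, _, _⟩; linarith
    have e4 : ¬(p1 < r1 ∧ r1 ≤ q1 ∧ 0 < δ r1) := by rintro ⟨_, h2, _⟩; linarith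
    have hsc : (0 < δ l1 ↔ 0 < δ q1) :=
      sign_const' hc (le_of_lt hq) (fun x h1 h2 => hnz x (by linarith) h2 h1 (by linarith))
    have hiff : (l1 < q1 ∧ q1 ≤ r1 ∧ 0 < δ q1) ↔ (p1 < l1 ∧ l1 ≤ q1 ∧ 0 < δ l1) := by
      constructor
      · rintro ⟨_, _, h3⟩; exact ⟨hl, le_of_lt hq, hsc.2 h3⟩
      · rintro ⟨_, _, h3⟩; exact ⟨hq, le_of_lt hr, hsc.1 h3⟩
    rw [ind_neg e2, ind_neg e4, ind_congr hiff]
  · have e1 : ¬(l1 < q1 ∧ q1 ≤ r1 ∧ 0 < δ q1) := by rintro ⟨_, h2, _⟩; linarith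
    have e2 : ¬(l1 < p1 ∧ p1 ≤ r1 ∧ 0 < δ p1) := by rintro ⟨h1, _, _⟩; linarith
    have hsc : (0 < δ l1 ↔ 0 < δ r1) :=
      sign_const' hc (le_of_lt hlr) (fun x h1 h2 => hnz x (by linarith) (by linarith) h1 h2)
    have hiff : (p1 < l1 ∧ l1 ≤ q1 ∧ 0 < δ l1) ↔ (p1 < r1 ∧ r1 ≤ q1 ∧ 0 < δ r1) := by
      constructor
      · rintro ⟨_, _, h3⟩; exact ⟨by linarith, le_of_lt hr, hsc.1 h3⟩
      · rintro ⟨_, _, h3⟩; exact ⟨hl, by linarith, hsc.2 h3⟩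
    rw [ind_neg e1, ind_neg e2, ind_congr hiff, zero_add, CharTwo.add_self_eq_zero]
  · have e3 : ¬(p1 < l1 ∧ l1 ≤ q1 ∧ 0 < δ l1) := by rintro ⟨h1, _, _⟩; linarith
    have e4 : ¬(p1 < r1 ∧ r1 ≤ q1 ∧ 0 < δ r1) := by rintro ⟨_, h2, _⟩; linarith
    have hsc : (0 < δ p1 ↔ 0 < δ q1) :=
      sign_const' hc (le_of_lt hpq) (fun x h1 h2 => hnz x h1 h2 (by linarith) (by linarith))
    have hiff : (l1 < q1 ∧ q1 ≤ r1 ∧ 0 < δ q1) ↔ (l1 < p1 ∧ p1 ≤ r1 ∧ 0 < δ p1) := by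
      constructor
      · rintro ⟨_, _, h3⟩; exact ⟨hl, by linarith, hsc.2 h3⟩
      · rintro ⟨_, _, h3⟩; exact ⟨by linarith, le_of_lt hr, hsc.1 h3⟩
    rw [ind_neg e3, ind_neg e4, ind_congr hiff, zero_add, CharTwo.add_self_eq_zero]
  · have e1 : ¬(l1 < q1 ∧ q1 ≤ r1 ∧ 0 < δ q1) := by rintro ⟨_, h2, _⟩; linarith
    have e3 : ¬(p1 < l1 ∧ l1 ≤ q1 ∧ 0 < δ l1) := by rintro ⟨h1, _, _⟩; linarith
    have hsc : (0 < δ p1 ↔ 0 < δ r1) :=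
      sign_const' hc (le_of_lt hp) (fun x h1 h2 => hnz x h1 (by linarith) (by linarith) h2)
    have hiff : (l1 < p1 ∧ p1 ≤ r1 ∧ 0 < δ p1) ↔ (p1 < r1 ∧ r1 ≤ q1 ∧ 0 < δ r1) := by
      constructor
      · rintro ⟨_, _, h3⟩; exact ⟨hp, le_of_lt hr, hsc.1 h3⟩
      · rintro ⟨_, _, h3⟩; exact ⟨hl, by linarith, hsc.2 h3⟩
    rw [ind_neg e1, ind_neg e3, ind_congr hiff]

lemma walk_sum {V : Type*} {G : SimpleGraph V} {u w : V} (W : G.Walk u w)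
    (φ : G.Dart → ZMod 2) (ψ : V → ZMod 2)
    (h : ∀ d ∈ W.darts, φ d = ψ d.fst + ψ d.snd) :
    (W.darts.map φ).sum = ψ u + ψ w := by
  induction W with
  | nil => exact (CharTwo.add_self_eq_zero _).symm
  | @cons u v w hadj W ih =>
    rw [Walk.darts_cons, List.map_cons, List.sum_cons,
      h _ (by simp), ih (fun d hd => h d (by simp [hd]))]
    show ψ u + ψ v + (ψ v + ψ w) = ψ u + ψ w
    linear_combination (CharTwo.add_self_eq_zero (ψ v) : ψ v + ψ v = 0)

lemma walk_const {V : Type*} {G : SimpleGraph V} {u w : V} (W : G.Walk u w)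
    (f : V → ZMod 2) (h : ∀ d ∈ W.darts, f d.fst = f d.snd) : f u = f w := by
  induction W with
  | nil => rfl
  | @cons u v w hadj W ih =>
    have h1 : f u = f v := h ⟨(u, v), hadj⟩ (by simp)
    exact h1.trans (ih (fun d hd => h d (by simp [hd])))

lemma mem_support_reachable {V : Type*} {G : SimpleGraph V} {u w v : V}
    (W : G.Walk u w) (h : v ∈ W.support) : G.Reachable u v := by
  classical exact (W.takeUntil v h).reachable

lemma list_sum_add {α : Type*} (L : List α) (f g : α → ZMod 2) :
    (L.map (fun x => f x + g x)).sum = (L.map f).sum + (L.map g).sum := by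
  induction L with
  | nil => simp
  | cons a L ih => simp [ih]; ring

/-- `s` lies strictly below the point `p` (with half-open span condition). -/
noncomputable def segBelow (s : Seg) (p : ℝ × ℝ) : Prop :=
  s.1.1 < p.1 ∧ p.1 ≤ s.2.1 ∧ htF s.1 s.2 p.1 < p.2

/-- the point `v` lies strictly below segment `t` (with half-open span condition). -/
noncomputable def ptBelow (t : Seg) (v : ℝ × ℝ) : Prop :=
  t.1.1 < v.1 ∧ v.1 ≤ t.2.1 ∧ v.2 < htF t.1 t.2 v.1

/-- the left-to-right orientation of an edge. -/
noncomputable def oseg (u w : ℝ × ℝ) : Seg := if u.1 < w.1 then (u, w) else (w, u)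

lemma oseg_spec {P : Finset (ℝ × ℝ)} {C : Finset Seg} (hon : SegsOn P C) {u w : ℝ × ℝ}
    (h : (segGraph C).Adj u w) :
    oseg u w ∈ C ∧ ((oseg u w).1 = u ∧ (oseg u w).2 = w ∨
      (oseg u w).1 = w ∧ (oseg u w).2 = u) := by
  rcases h.2 with h' | h'
  · have hlt : u.1 < w.1 := (hon _ h').2.2
    rw [oseg, if_pos hlt]
    exact ⟨h', Or.inl ⟨rfl, rfl⟩⟩
  · have hlt : w.1 < u.1 := (hon _ h').2.2
    rw [oseg, if_neg (by linarith)]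
    exact ⟨h', Or.inr ⟨rfl, rfl⟩⟩

lemma not_ptBelow {P : Finset (ℝ × ℝ)} {C : Finset Seg} (hx : DistinctX P)
    (hon : SegsOn P C) {t : Seg} (ht : t ∈ C) {g : ℝ × ℝ} (hgP : g ∈ P)
    (hglow : g ∉ lowShadow t) (hne2 : g ≠ t.2) : ¬ ptBelow t g := by
  obtain ⟨hpP, hqP, hpq⟩ := hon t ht
  rintro ⟨h1, h2, h3⟩
  have h2' : g.1 < t.2.1 := lt_of_le_of_ne h2 (hx _ hgP _ hqP hne2)
  refine hglow ⟨htF t.1 t.2 g.1, h3, (mem_openSegment_iff' hpq).2 ⟨h1, h2', rfl⟩⟩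

lemma below_of_gray {P : Finset (ℝ × ℝ)} {C : Finset Seg} (hgen : GenPos P)
    (hon : SegsOn P C) {s : Seg} (hs : s ∈ C) {g : ℝ × ℝ} (hgP : g ∈ P)
    (hglow : g ∉ lowShadow s) (hne1 : s.1 ≠ g) (hne2 : s.2 ≠ g)
    (hspan1 : s.1.1 < g.1) (hspan2 : g.1 < s.2.1) : htF s.1 s.2 g.1 < g.2 := by
  obtain ⟨hlP, hrP, hlr⟩ := hon s hs
  have hss : s.1 ≠ s.2 := fun h => absurd hlr (by rw [h]; exact lt_irrefl _)
  rcases lt_trichotomy (htF s.1 s.2 g.1) g.2 with h | h | h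
  · exact h
  · exfalso
    have hmem : (g.1, g.2) ∈ openSegment ℝ s.1 s.2 :=
      (mem_openSegment_iff' hlr).2 ⟨hspan1, hspan2, h.symm⟩
    rw [Prod.mk.eta] at hmem
    exact hgen g hgP s.1 hlP s.2 hrP hne1.symm hss hne2.symm
      (collinear_of_mem_openSegment hmem)
  · exact absurd ⟨htF s.1 s.2 g.1, h, (mem_openSegment_iff' hlr).2 ⟨hspan1, hspan2, rfl⟩⟩ hglow

lemma edge_parity {P : Finset (ℝ × ℝ)} {C : Finset Seg} (hgen : GenPos P) (hx : DistinctX P)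
    (hon : SegsOn P C) (hcf : CrossingFree C) {s t : Seg} (hs : s ∈ C) (ht : t ∈ C)
    (hd1 : s.1 ≠ t.1) (hd2 : s.1 ≠ t.2) (hd3 : s.2 ≠ t.1) (hd4 : s.2 ≠ t.2) :
    ind (segBelow s t.2) + ind (segBelow s t.1) =
    ind (ptBelow t s.1) + ind (ptBelow t s.2) := by
  obtain ⟨hlP, hrP, hlr⟩ := hon s hs
  obtain ⟨hpP, hqP, hpq⟩ := hon t ht
  have hst : s ≠ t := fun h => hd1 (by rw [h])
  have hss : s.1 ≠ s.2 := fun h => absurd hlr (by rw [h]; exact lt_irrefl _)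
  have htt : t.1 ≠ t.2 := fun h => absurd hpq (by rw [h]; exact lt_irrefl _)
  have xpl : t.1.1 ≠ s.1.1 := hx _ hpP _ hlP hd1.symm
  have xpr : t.1.1 ≠ s.2.1 := hx _ hpP _ hrP hd3.symm
  have xql : t.2.1 ≠ s.1.1 := hx _ hqP _ hlP hd2.symm
  have xqr : t.2.1 ≠ s.2.1 := hx _ hqP _ hrP hd4.symm
  set δ : ℝ → ℝ := fun x => htF t.1 t.2 x - htF s.1 s.2 x with hδ
  have hc : Continuous δ := (htF_continuous t.1 t.2).sub (htF_continuous s.1 s.2)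
  have hnz : ∀ x, t.1.1 ≤ x → x ≤ t.2.1 → s.1.1 ≤ x → x ≤ s.2.1 → δ x ≠ 0 := by
    intro x h1 h2 h3 h4 h0
    have hyx : htF t.1 t.2 x = htF s.1 s.2 x := by
      have : htF t.1 t.2 x - htF s.1 s.2 x = 0 := h0
      linarith
    rcases eq_or_lt_of_le h1 with hxp | hxp
    · -- x = t.1.1 : t.1 lies on the open segment s
      have hx1 : s.1.1 < x := lt_of_le_of_ne h3 (fun h => xpl (hxp.trans h.symm))
      have hx2 : x < s.2.1 := lt_of_le_of_ne h4 (fun h => xpr (hxp.trans h))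
      have hy : t.1.2 = htF s.1 s.2 x := by rw [← hyx, ← hxp, htF_left hpq]
      have hmem : (x, t.1.2) ∈ openSegment ℝ s.1 s.2 :=
        (mem_openSegment_iff' hlr).2 ⟨hx1, hx2, hy⟩
      rw [← hxp, Prod.mk.eta] at hmem
      exact hgen t.1 hpP s.1 hlP s.2 hrP hd1.symm hss hd3.symm
        (collinear_of_mem_openSegment hmem)
    rcases eq_or_lt_of_le h2 with hxq | hxq
    · -- x = t.2.1
      have hx1 : s.1.1 < x := lt_of_le_of_ne h3 (fun h => xql (hxq.symm.trans h.symm))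
      have hx2 : x < s.2.1 := lt_of_le_of_ne h4 (fun h => xqr (hxq.symm.trans h))
      have hy : t.2.2 = htF s.1 s.2 x := by rw [← hyx, hxq, htF_right hpq]
      have hmem : (x, t.2.2) ∈ openSegment ℝ s.1 s.2 :=
        (mem_openSegment_iff' hlr).2 ⟨hx1, hx2, hy⟩
      rw [hxq, Prod.mk.eta] at hmem
      exact hgen t.2 hqP s.1 hlP s.2 hrP hd2.symm hss hd4.symm
        (collinear_of_mem_openSegment hmem)
    rcases eq_or_lt_of_le h3 with hxl | hxl
    · -- x = s.1.1 : s.1 lies on the open segment t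
      have hy : s.1.2 = htF t.1 t.2 x := by rw [hyx, ← hxl, htF_left hlr]
      have hmem : (x, s.1.2) ∈ openSegment ℝ t.1 t.2 :=
        (mem_openSegment_iff' hpq).2 ⟨hxp, hxq, hy⟩
      rw [← hxl, Prod.mk.eta] at hmem
      exact hgen s.1 hlP t.1 hpP t.2 hqP hd1 htt hd2
        (collinear_of_mem_openSegment hmem)
    rcases eq_or_lt_of_le h4 with hxr | hxr
    · -- x = s.2.1
      have hy : s.2.2 = htF t.1 t.2 x := by rw [hyx, hxr, htF_right hlr]
      have hmem : (x, s.2.2) ∈ openSegment ℝ t.1 t.2 :=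
        (mem_openSegment_iff' hpq).2 ⟨hxp, hxq, hy⟩
      rw [hxr, Prod.mk.eta] at hmem
      exact hgen s.2 hrP t.1 hpP t.2 hqP hd3 htt hd4
        (collinear_of_mem_openSegment hmem)
    · -- interior crossing
      have hmem1 : (x, htF s.1 s.2 x) ∈ openSegment ℝ s.1 s.2 :=
        (mem_openSegment_iff' hlr).2 ⟨hxl, hxr, rfl⟩
      have hmem2 : (x, htF s.1 s.2 x) ∈ openSegment ℝ t.1 t.2 :=
        (mem_openSegment_iff' hpq).2 ⟨hxp, hxq, hyx.symm⟩
      exact Set.disjoint_left.1 (hcf s hs t ht hst) hmem1 hmem2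
  have i1 : segBelow s t.2 ↔ (s.1.1 < t.2.1 ∧ t.2.1 ≤ s.2.1 ∧ 0 < δ t.2.1) := by
    unfold segBelow
    rw [hδ]
    simp only [htF_right hpq, sub_pos]
  have i2 : segBelow s t.1 ↔ (s.1.1 < t.1.1 ∧ t.1.1 ≤ s.2.1 ∧ 0 < δ t.1.1) := by
    unfold segBelow
    rw [hδ]
    simp only [htF_left hpq, sub_pos]
  have i3 : ptBelow t s.1 ↔ (t.1.1 < s.1.1 ∧ s.1.1 ≤ t.2.1 ∧ 0 < δ s.1.1) := by
    unfold ptBelow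
    rw [hδ]
    simp only [htF_left hlr, sub_pos]
  have i4 : ptBelow t s.2 ↔ (t.1.1 < s.2.1 ∧ s.2.1 ≤ t.2.1 ∧ 0 < δ s.2.1) := by
    unfold ptBelow
    rw [hδ]
    simp only [htF_right hlr, sub_pos]
  rw [ind_congr i1, ind_congr i2, ind_congr i3, ind_congr i4]
  exact parity_abstract hc hpq hlr xpl xpr xql xqr hnz


end Aux

/-- If `C` is a crossing-free, cycle-free set of segments with endpoints in a point set
`P` in general position with distinct `x`-coordinates, then the connectivity partition of
the gray points `G = pts(C) \ low(C)`, ordered from left to right, is non-crossing: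
there are no `a < b < c < d` in `G` with `a, c` connected, `b, d` connected, but
`a, b` not connected. -/
theorem gray_partition_noncrossing (P : Finset (ℝ × ℝ)) (C : Finset Seg)
    (hgen : GenPos P) (hx : DistinctX P) (hon : SegsOn P C)
    (hcf : CrossingFree C) (hacyc : (segGraph C).IsAcyclic) :
    ∀ a b c d : ℝ × ℝ,
      a ∈ grayPts C → b ∈ grayPts C → c ∈ grayPts C → d ∈ grayPts C →
      a.1 < b.1 → b.1 < c.1 → c.1 < d.1 →
      (segGraph C).Reachable a c → (segGraph C).Reachable b d →
      (segGraph C).Reachable a b := by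
  
  classical
  intro a b c d ha hb hc hd hab1 hbc1 hcd1 hac hbd
  by_contra hreach
  obtain ⟨Wac⟩ := hac
  obtain ⟨Wbd⟩ := hbd
  obtain ⟨ha1, ha2⟩ := ha
  obtain ⟨hb1, hb2⟩ := hb
  obtain ⟨hc1, hc2⟩ := hc
  obtain ⟨hd1, hd2⟩ := hd
  have memP : ∀ g : ℝ × ℝ, (∃ s ∈ C, g ∈ segPts s) → g ∈ P := by
    rintro g ⟨s, hsC, hg⟩
    rcases hg with h | h
    · exact h ▸ (hon s hsC).1
    · exact h ▸ (hon s hsC).2.1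
  have haP : a ∈ P := memP a ha1
  have hbP : b ∈ P := memP b hb1
  have hcP : c ∈ P := memP c hc1
  have hdP : d ∈ P := memP d hd1
  have hsep : ∀ u v : ℝ × ℝ, (segGraph C).Reachable a u → (segGraph C).Reachable b v →
      u ≠ v := by
    intro u v hu hv huv
    subst huv
    exact hreach (hu.trans hv.symm)
  have hWbd_fst : ∀ dr ∈ Wbd.darts, (segGraph C).Reachable b dr.fst :=
    fun dr hdr => mem_support_reachable Wbd (Wbd.dart_fst_mem_support_of_mem_darts hdr)
  have hWbd_snd : ∀ dr ∈ Wbd.darts, (segGraph C).Reachable b dr.snd :=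
    fun dr hdr => mem_support_reachable Wbd (Wbd.dart_snd_mem_support_of_mem_darts hdr)
  have hWac_fst : ∀ dr ∈ Wac.darts, (segGraph C).Reachable a dr.fst :=
    fun dr hdr => mem_support_reachable Wac (Wac.dart_fst_mem_support_of_mem_darts hdr)
  have hWac_snd : ∀ dr ∈ Wac.darts, (segGraph C).Reachable a dr.snd :=
    fun dr hdr => mem_support_reachable Wac (Wac.dart_snd_mem_support_of_mem_darts hdr)
  set Mf : (ℝ × ℝ) → ZMod 2 :=
    fun v => (Wbd.darts.map (fun dr => ind (segBelow (oseg dr.fst dr.snd) v))).sum with hMf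
  -- Step A: value of Mf at a gray point not reachable from b
  have keyA : ∀ g : ℝ × ℝ, g ∈ P → (∀ s ∈ C, g ∉ lowShadow s) →
      ¬ (segGraph C).Reachable b g →
      Mf g = ind (b.1 < g.1) + ind (d.1 < g.1) := by
    intro g hgP hglow hgb
    rw [hMf]
    refine walk_sum Wbd _ (fun v => ind (v.1 < g.1)) ?_
    intro dr hdr
    obtain ⟨hsC, hor⟩ := oseg_spec hon dr.adj
    set s : Seg := oseg dr.fst dr.snd with hsdef
    obtain ⟨hlP, hrP, hlr⟩ := hon s hsC
    have hr1 : (segGraph C).Reachable b s.1 := by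
      rcases hor with ⟨h1, _⟩ | ⟨h1, _⟩
      · rw [h1]; exact hWbd_fst dr hdr
      · rw [h1]; exact hWbd_snd dr hdr
    have hr2 : (segGraph C).Reachable b s.2 := by
      rcases hor with ⟨_, h2⟩ | ⟨_, h2⟩
      · rw [h2]; exact hWbd_snd dr hdr
      · rw [h2]; exact hWbd_fst dr hdr
    have hne1 : s.1 ≠ g := fun h => hgb (h ▸ hr1)
    have hne2 : s.2 ≠ g := fun h => hgb (h ▸ hr2)
    have hx1 : s.1.1 ≠ g.1 := hx _ hlP _ hgP hne1
    have hx2 : s.2.1 ≠ g.1 := hx _ hrP _ hgP hne2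
    have hsum : ind (dr.fst.1 < g.1) + ind (dr.snd.1 < g.1) =
        ind (s.1.1 < g.1) + ind (s.2.1 < g.1) := by
      rcases hor with ⟨h1, h2⟩ | ⟨h1, h2⟩
      · rw [h1, h2]
      · rw [h1, h2]; exact add_comm _ _
    show ind (segBelow s g) = ind (dr.fst.1 < g.1) + ind (dr.snd.1 < g.1)
    rw [hsum]
    by_cases h1 : s.1.1 < g.1
    · by_cases h2 : g.1 < s.2.1
      · have hbel : htF s.1 s.2 g.1 < g.2 :=
          below_of_gray hgen hon hsC hgP (hglow s hsC) hne1 hne2 h1 h2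
        have hsb : segBelow s g := ⟨h1, le_of_lt h2, hbel⟩
        rw [ind_pos hsb, ind_pos h1, ind_neg (not_lt.2 (le_of_lt h2)), add_zero]
      · have h2' : s.2.1 < g.1 := lt_of_le_of_ne (not_lt.1 h2) hx2
        have hsb : ¬ segBelow s g := fun hsb => absurd hsb.2.1 (not_le.2 h2')
        rw [ind_neg hsb, ind_pos h1, ind_pos h2']
        decide
    · have h1' : g.1 < s.1.1 := lt_of_le_of_ne (not_lt.1 h1) (fun h => hx1 h.symm)
      have hsb : ¬ segBelow s g := fun hsb => absurd hsb.1 h1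
      rw [ind_neg hsb, ind_neg h1, ind_neg (not_lt.2 (le_of_lt (lt_trans h1' hlr))), add_zero]
  have hba : ¬ (segGraph C).Reachable b a := fun h => hreach h.symm
  have hbc : ¬ (segGraph C).Reachable b c := fun h => hreach (Wac.reachable.trans h.symm)
  have hMa : Mf a = 0 := by
    rw [keyA a haP ha2 hba, ind_neg (not_lt.2 (le_of_lt hab1)),
      ind_neg (not_lt.2 (le_of_lt (lt_trans (lt_trans hab1 hbc1) hcd1))), add_zero]
  have hMc : Mf c = 1 := by
    rw [keyA c hcP hc2 hbc, ind_pos hbc1, ind_neg (not_lt.2 (le_of_lt hcd1)), add_zero]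
  -- Step B: Mf is constant along edges of Wac
  have keyB : ∀ dr ∈ Wac.darts, Mf dr.fst = Mf dr.snd := by
    intro dr hdr
    obtain ⟨htC, hor⟩ := oseg_spec hon dr.adj
    set t : Seg := oseg dr.fst dr.snd with htdef
    obtain ⟨hpP, hqP, hpq⟩ := hon t htC
    have hrt1 : (segGraph C).Reachable a t.1 := by
      rcases hor with ⟨h1, _⟩ | ⟨h1, _⟩
      · rw [h1]; exact hWac_fst dr hdr
      · rw [h1]; exact hWac_snd dr hdr
    have hrt2 : (segGraph C).Reachable a t.2 := by
      rcases hor with ⟨_, h2⟩ | ⟨_, h2⟩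
      · rw [h2]; exact hWac_snd dr hdr
      · rw [h2]; exact hWac_fst dr hdr
    have main : Mf t.2 + Mf t.1 = 0 := by
      have hdarts : ∀ dr' ∈ Wbd.darts,
          (fun dr' : (segGraph C).Dart => ind (segBelow (oseg dr'.fst dr'.snd) t.2) +
            ind (segBelow (oseg dr'.fst dr'.snd) t.1)) dr' =
          (fun v => ind (ptBelow t v)) dr'.fst + (fun v => ind (ptBelow t v)) dr'.snd := by
        intro dr' hdr'
        obtain ⟨hsC, hor'⟩ := oseg_spec hon dr'.adj
        set s : Seg := oseg dr'.fst dr'.snd with hsdef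
        have hrs1 : (segGraph C).Reachable b s.1 := by
          rcases hor' with ⟨h1, _⟩ | ⟨h1, _⟩
          · rw [h1]; exact hWbd_fst dr' hdr'
          · rw [h1]; exact hWbd_snd dr' hdr'
        have hrs2 : (segGraph C).Reachable b s.2 := by
          rcases hor' with ⟨_, h2⟩ | ⟨_, h2⟩
          · rw [h2]; exact hWbd_snd dr' hdr'
          · rw [h2]; exact hWbd_fst dr' hdr'
        have e1 : s.1 ≠ t.1 := (hsep t.1 s.1 hrt1 hrs1).symm
        have e2 : s.1 ≠ t.2 := (hsep t.2 s.1 hrt2 hrs1).symm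
        have e3 : s.2 ≠ t.1 := (hsep t.1 s.2 hrt1 hrs2).symm
        have e4 : s.2 ≠ t.2 := (hsep t.2 s.2 hrt2 hrs2).symm
        have hep := edge_parity hgen hx hon hcf hsC htC e1 e2 e3 e4
        show ind (segBelow s t.2) + ind (segBelow s t.1) =
          ind (ptBelow t dr'.fst) + ind (ptBelow t dr'.snd)
        rw [hep]
        rcases hor' with ⟨h1, h2⟩ | ⟨h1, h2⟩
        · rw [h1, h2]
        · rw [h1, h2]; exact add_comm _ _
      have hsum := walk_sum Wbd _ (fun v => ind (ptBelow t v)) hdarts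
      rw [list_sum_add Wbd.darts (fun dr' => ind (segBelow (oseg dr'.fst dr'.snd) t.2))
        (fun dr' => ind (segBelow (oseg dr'.fst dr'.snd) t.1))] at hsum
      have hψb : ind (ptBelow t b) = 0 := by
        refine ind_neg (not_ptBelow hx hon htC hbP (hb2 t htC) ?_)
        exact (hsep t.2 b hrt2 (SimpleGraph.Reachable.refl b)).symm
      have hψd : ind (ptBelow t d) = 0 := by
        refine ind_neg (not_ptBelow hx hon htC hdP (hd2 t htC) ?_)
        exact (hsep t.2 d hrt2 Wbd.reachable).symm
      simp only [hψb, hψd, add_zero] at hsum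
      rw [hMf]
      exact hsum
    have hMt : Mf t.2 = Mf t.1 := by
      calc Mf t.2 = (Mf t.1 + Mf t.1) + Mf t.2 := by
            rw [CharTwo.add_self_eq_zero, zero_add]
        _ = Mf t.1 + (Mf t.2 + Mf t.1) := by ring
        _ = Mf t.1 := by rw [main, add_zero]
    rcases hor with ⟨h1, h2⟩ | ⟨h1, h2⟩
    · rw [← h1, ← h2]; exact hMt.symm
    · rw [← h1, ← h2]; exact hMt
  have hfinal : Mf a = Mf c := walk_const Wac Mf keyB
  rw [hMa, hMc] at hfinal
  exact absurd hfinal (by decide)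
end

section
/- Let P be a finite planar point set in general position with distinct x-coordinates, and let C be a crossing-free set of segments that is a prefix of some crossing-free spanning tree on P (i.e., the spanning tree can be obtained from C by repeatedly adding the right-most extreme element). Then C is cycle-free and C has no hidden component, where a hidden component is a connected component U of C such that every point of U lies in low(s) for some segment s ∈ C. -/
open Finset

lemma segGraph_mono {A B : Finset Seg} (h : A ⊆ B) : segGraph A ≤ segGraph B := by
  intro a b hab
  exact ⟨hab.1, hab.2.imp (fun h' => h h') (fun h' => h h')⟩

/-- A spanning tree (indeed, any connected segment set on `P`) has no hidden
component: the topmost point of `P` lies in no lower shadow. -/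
lemma tree_noHidden (P : Finset (ℝ × ℝ)) (T : Finset Seg) (hT : IsCFSpanningTree P T) :
    ¬ HasHiddenComponent P T := by
  rintro ⟨p, hp, hq⟩
  obtain ⟨q, hqP, hqmax⟩ := P.exists_max_image (fun r => r.2) ⟨p, hp⟩
  obtain ⟨t, htT, y, hy, hmem⟩ := hq q (hT.2.2.2 p hp q hqP)
  obtain ⟨a, b, ha, hb, hab, heq⟩ := hmem
  have h1 := (hT.1 t htT).1
  have h2 := (hT.1 t htT).2.1
  have hy2 : a * t.1.2 + b * t.2.2 = y := by
    have := congrArg Prod.snd heq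
    simpa [smul_eq_mul] using this
  have e1 : a * t.1.2 ≤ a * q.2 := mul_le_mul_of_nonneg_left (hqmax t.1 h1) ha.le
  have e2 : b * t.2.2 ≤ b * q.2 := mul_le_mul_of_nonneg_left (hqmax t.2 h2) hb.le
  have hsum : a * q.2 + b * q.2 = q.2 := by rw [← add_mul, hab, one_mul]
  linarith

/-- If neither endpoint of `s` is reachable from `p` after erasing `s`, then
reachability from `p` is unchanged by erasing `s`. -/
lemma reach_erase (B : Finset Seg) (s : Seg) (p q : ℝ × ℝ)
    (h : (segGraph B).Reachable p q)
    (h1 : ¬ (segGraph (B.erase s)).Reachable p s.1)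
    (h2 : ¬ (segGraph (B.erase s)).Reachable p s.2) :
    (segGraph (B.erase s)).Reachable p q := by
  suffices H : ∀ u v, (segGraph B).Walk u v → (segGraph (B.erase s)).Reachable p u →
      (segGraph (B.erase s)).Reachable p v by
    obtain ⟨w⟩ := h
    exact H p q w (SimpleGraph.Reachable.refl p)
  intro u v w
  induction w with
  | nil => exact id
  | @cons u x v hadj w ih =>
    intro hpu
    apply ih
    obtain ⟨hne, hmem | hmem⟩ := hadj
    · by_cases hs : (u, x) = s
      · have hu : u = s.1 := congrArg Prod.fst hs
        rw [hu] at hpu; exact absurd hpu h1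
      · exact hpu.trans (SimpleGraph.Adj.reachable
          ⟨hne, Or.inl (Finset.mem_erase.2 ⟨hs, hmem⟩)⟩)
    · by_cases hs : (x, u) = s
      · have : u = s.2 := congrArg Prod.snd hs
        rw [this] at hpu; exact absurd hpu h2
      · exact hpu.trans (SimpleGraph.Adj.reachable
          ⟨hne, Or.inr (Finset.mem_erase.2 ⟨hs, hmem⟩)⟩)

lemma prefix_subset {C T : Finset Seg} (h : IsSegPrefix C T) : C ⊆ T := by
  induction h with
  | refl => exact Finset.Subset.refl _
  | tail _ hstep ih =>
    obtain ⟨s, hAe, _, _⟩ := hstep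
    exact ih.trans (hAe ▸ Finset.erase_subset _ _)

/-- One backward step preserves the absence of hidden components. -/
lemma step_noHidden (P : Finset (ℝ × ℝ)) {A B : Finset Seg} {s : Seg}
    (hstep : StepRel A s B) (hB : ¬ HasHiddenComponent P B) :
    ¬ HasHiddenComponent P A := by
  rintro ⟨p, hp, hq⟩
  obtain ⟨hAe, hsB, hrex⟩ := hstep
  subst hAe
  have key : ∀ e, e ∈ segPts s → ¬ (segGraph (B.erase s)).Reachable p e := by
    intro e he hre
    obtain ⟨s'', hs''A, hlow⟩ := hq e hre
    exact hrex.1.2 s'' (Finset.mem_of_mem_erase hs''A) (Finset.ne_of_mem_erase hs''A)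
      (Or.inl ⟨e, he, hlow⟩)
  apply hB
  refine ⟨p, hp, fun q hr => ?_⟩
  have hr' : (segGraph (B.erase s)).Reachable p q :=
    reach_erase B s p q hr (key s.1 (by simp [segPts])) (key s.2 (by simp [segPts]))
  obtain ⟨s', hs', hl⟩ := hq q hr'
  exact ⟨s', Finset.mem_of_mem_erase hs', hl⟩

/-- Every prefix `C` of a crossing-free spanning tree on `P` is cycle-free (A1) and has
no hidden component (A2). -/
theorem prefix_of_spanning_tree (P : Finset (ℝ × ℝ)) (C : Finset Seg)
    (hgen : GenPos P) (hx : DistinctX P) (hon : SegsOn P C) (hcf : CrossingFree C)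
    (hpre : ∃ T : Finset Seg, IsCFSpanningTree P T ∧ IsSegPrefix C T) :
    (segGraph C).IsAcyclic ∧ ¬ HasHiddenComponent P C := by
  obtain ⟨T, hT, hpre⟩ := hpre
  constructor
  · -- C ⊆ T, then transfer acyclicity
    have hsub : C ⊆ T := prefix_subset hpre
    intro v c hc
    exact hT.2.2.1 (c.mapLe (segGraph_mono hsub)) (hc.mapLe (segGraph_mono hsub))
  · refine Relation.ReflTransGen.head_induction_on hpre (tree_noHidden P T hT) ?_
    rintro a c ⟨s, hstep⟩ _ ih
    exact step_noHidden P hstep ih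
end

section
/- Let D be a serializable set of combinations and ~ a coherent equivalence relation on which D is progressive. Then the quotient structure is a well-defined DAG: the relation on equivalence classes given by [C] → [C'] whenever C →_s C' for some representatives is acyclic. -/
/-!
Every step adds a fresh segment, so it raises the cardinality by one. By coherency a step
out of one representative of a class can be replayed from any other representative, in
particular from one of maximal cardinality; hence the maximal cardinality within a class
strictly increases along every edge of the quotient, which rules out cycles.
-/

open Finset

section ClassSup

variable {α : Type*} [Fintype α] (r : α → α → Prop) (f : α → ℕ)

open Classical in
noncomputable def classSup (a : α) : ℕ := (univ.filter (r a)).sup f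

variable {r f}

theorem le_classSup {a b : α} (h : r a b) : f b ≤ classSup r f a := by
  classical
  exact le_sup (mem_filter.2 ⟨mem_univ b, h⟩)

theorem exists_eq_classSup {a : α} (h : r a a) : ∃ b, r a b ∧ f b = classSup r f a := by
  classical
  obtain ⟨b, hb, hsup⟩ :=
    exists_mem_eq_sup (univ.filter (r a)) ⟨a, mem_filter.2 ⟨mem_univ a, h⟩⟩ f
  exact ⟨b, (mem_filter.1 hb).2, hsup.symm⟩

theorem classSup_lt_classSup (hr : Equivalence r) {a b : α}
    (h : ∀ a₀, r a a₀ → ∃ b₀, r b b₀ ∧ f a₀ < f b₀) : classSup r f a < classSup r f b := by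
  obtain ⟨a₀, ha₀, hmax⟩ := exists_eq_classSup (f := f) (hr.refl a)
  obtain ⟨b₀, hb₀, hlt⟩ := h a₀ ha₀
  exact hmax ▸ hlt.trans_le (le_classSup hb₀)

end ClassSup

theorem exists_card_lt_of_step_of_coherent {σ : Type*} [DecidableEq σ]
    {step : Finset σ → σ → Finset σ → Prop} {r : Finset σ → Finset σ → Prop}
    (hequiv : Equivalence r) (hstep : ∀ C s C', step C s C' → s ∉ C ∧ C' = insert s C)
    (hcoh : ∀ C1 C2 s C1', r C1 C2 → step C1 s C1' → ∃ C2', step C2 s C2' ∧ r C1' C2')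
    {A A' A₀ B B' : Finset σ} {s : σ} (hAA' : r A A') (hBB' : r B B') (hst : step A' s B')
    (hAA₀ : r A A₀) : ∃ B₀, r B B₀ ∧ A₀.card < B₀.card := by
  obtain ⟨B₀, hst₀, hB'B₀⟩ := hcoh A' A₀ s B' (hequiv.trans (hequiv.symm hAA') hAA₀) hst
  obtain ⟨hs, rfl⟩ := hstep A₀ s B₀ hst₀
  exact ⟨_, hequiv.trans hBB' hB'B₀, card_lt_card (ssubset_insert hs)⟩

theorem quotient_dag_acyclic_general {σ : Type} [Fintype σ] [DecidableEq σ]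
    (D : Set (Finset σ)) (step : Finset σ → σ → Finset σ → Prop)
    (r : Finset σ → Finset σ → Prop) (hequiv : Equivalence r)
    (hstep : ∀ C s C', step C s C' → s ∉ C ∧ C' = insert s C)
    (hcoh : ∀ C1 C2 s C1', r C1 C2 → step C1 s C1' →
      ∃ C2', step C2 s C2' ∧ r C1' C2') :
    ∀ C : Finset σ,
      ¬ Relation.TransGen
          (fun A B => ∃ A' B' s, A' ∈ D ∧ B' ∈ D ∧ r A A' ∧ r B B' ∧ step A' s B')
          C C := by
  intro C hcycle
  have hedge : ∀ A B, (∃ A' B' s, A' ∈ D ∧ B' ∈ D ∧ r A A' ∧ r B B' ∧ step A' s B') →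
      classSup r card A < classSup r card B := by
    rintro A B ⟨A', B', s, -, -, hAA', hBB', hst⟩
    exact classSup_lt_classSup hequiv fun A₀ hAA₀ ↦
      exists_card_lt_of_step_of_coherent hequiv hstep hcoh hAA' hBB' hst hAA₀
  have hlt := hcycle.lift (classSup r card) hedge
  rw [Relation.transGen_eq_self] at hlt
  exact lt_irrefl _ hlt

/-- If `D` is a serializable set of combinations over a finite segment type, `r` a
coherent equivalence relation on which `D` is progressive, then the quotient structure
is a well-defined DAG: the relation on equivalence classes given by `[C] → [C']`
whenever `A →ₛ B` for some representatives `A ~ C`, `B ~ C'` is acyclic. -/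
theorem quotient_dag_acyclic {σ : Type} [Fintype σ] [DecidableEq σ]
    (D : Set (Finset σ)) (step : Finset σ → σ → Finset σ → Prop)
    (r : Finset σ → Finset σ → Prop) (hequiv : Equivalence r)
    (hstep : ∀ C s C', step C s C' → s ∉ C ∧ C' = insert s C)
    (hser : D.Nonempty ∧
      ∀ C ∈ D, C.Nonempty → ∃ s ∈ C, step (C.erase s) s C ∧ C.erase s ∈ D)
    (hcoh : ∀ C1 C2 s C1', r C1 C2 → step C1 s C1' →
      ∃ C2', step C2 s C2' ∧ r C1' C2')
    (hprog : ∀ C s C', step C s C' → ¬ r C C') :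
    ∀ C : Finset σ,
      ¬ Relation.TransGen
          (fun A B => ∃ A' B' s, A' ∈ D ∧ B' ∈ D ∧ r A A' ∧ r B B' ∧ step A' s B')
          C C :=
  quotient_dag_acyclic_general D step r hequiv hstep hcoh
end
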